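/- arXiv:2110.07943 — 5 statements merged into one kernel-verified Lean document; each statement's English description precedes it below -/
import Mathlib

section
/- For any twice differentiable function u : ℝⁿ → ℝ at a point where Du ≠ 0, one has the inequality |Du|⁴|D²u|² ≥ 2|Du|²|D²u Du|² + (|Du|²Δu − Δ_∞u)²/(n−1) − (Δ_∞u)², where n ≥ 2, Δu is the trace of D²u, Δ_∞u = ⟨D²u Du, Du⟩, and |D²u| is the Hilbert–Schmidt (Frobenius) norm of the symmetric matrix D²u. -/
open Matrix Finset

private lemma sum_sq_comb {n : ℕ} (a b c : ℝ) (h v w : Fin n → ℝ) :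
    ∑ j, (a * h j + b * v j + c * w j) ^ 2 =
      a ^ 2 * ∑ j, h j ^ 2 + b ^ 2 * ∑ j, v j ^ 2 + c ^ 2 * ∑ j, w j ^ 2
      + 2 * a * b * ∑ j, h j * v j + 2 * a * c * ∑ j, h j * w j
      + 2 * b * c * ∑ j, v j * w j := by
  simp_rw [Finset.mul_sum, ← Finset.sum_add_distrib]
  exact Finset.sum_congr rfl fun j _ => by ring

private lemma sum_lin_mul {n : ℕ} (a b c : ℝ) (h v w u : Fin n → ℝ) :
    ∑ j, (a * h j + b * v j + c * w j) * u j =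
      a * ∑ j, h j * u j + b * ∑ j, v j * u j + c * ∑ j, w j * u j := by
  simp_rw [Finset.mul_sum, ← Finset.sum_add_distrib]
  exact Finset.sum_congr rfl fun j _ => by ring

theorem fundamental_inequality (n : ℕ) (hn : 2 ≤ n)
    (H : Matrix (Fin n) (Fin n) ℝ) (hH : H.IsSymm)
    (v : Fin n → ℝ) (hv : v ≠ 0) :
    (∑ i, v i ^ 2) ^ 2 * (∑ i, ∑ j, H i j ^ 2) ≥
      2 * (∑ i, v i ^ 2) * (∑ i, (H.mulVec v i) ^ 2)
      + ((∑ i, v i ^ 2) * H.trace - H.mulVec v ⬝ᵥ v) ^ 2 / ((n : ℝ) - 1)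
      - (H.mulVec v ⬝ᵥ v) ^ 2 := by
  classical
  set s : ℝ := ∑ i, v i ^ 2 with hs_def
  set w : Fin n → ℝ := H.mulVec v with hw_def
  have hw : ∀ i, w i = ∑ j, H i j * v j := by
    intro i; simp [hw_def, Matrix.mulVec, dotProduct]
  set t : ℝ := w ⬝ᵥ v with ht_def
  have ht : ∑ i, w i * v i = t := by simp [ht_def, dotProduct]
  set T : ℝ := H.trace with hT_def
  have hT : ∑ i, H i i = T := by simp [hT_def, Matrix.trace, Matrix.diag]
  set SH : ℝ := ∑ i, ∑ j, H i j ^ 2 with hSH_def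
  set SW : ℝ := ∑ i, w i ^ 2 with hSW_def
  have hs : 0 < s := by
    obtain ⟨i, hi⟩ := Function.ne_iff.mp hv
    have hi' : v i ≠ 0 := by simpa using hi
    exact Finset.sum_pos' (fun j _ => sq_nonneg _) ⟨i, Finset.mem_univ i, by positivity⟩
  have hsym : ∀ i j, H j i = H i j := fun i j => hH.apply i j
  have hcol : ∀ j, ∑ i, H i j * v i = w j := by
    intro j
    rw [hw j]
    exact Finset.sum_congr rfl fun i _ => by rw [hsym j i]
  have hvv : ∑ j, v j * v j = s := by
    rw [hs_def]; exact Finset.sum_congr rfl fun j _ => by ring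
  have hwv : ∑ j, w j * v j = t := ht
  have hvw : ∑ j, v j * w j = t := by
    rw [← ht]; exact Finset.sum_congr rfl fun j _ => by ring
  have hww : ∑ j, w j * w j = SW := by
    rw [hSW_def]; exact Finset.sum_congr rfl fun j _ => by ring
  have hq : ∑ i, v i * (∑ j, H i j * w j) = SW := by
    simp_rw [Finset.mul_sum]
    rw [Finset.sum_comm]
    have e1 : ∀ j, ∑ i, v i * (H i j * w j) = w j ^ 2 := by
      intro j
      have e2 : ∑ i, v i * (H i j * w j) = (∑ i, H i j * v i) * w j := by
        rw [Finset.sum_mul]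
        exact Finset.sum_congr rfl fun i _ => by ring
      rw [e2, hcol j]; ring
    rw [hSW_def]
    exact Finset.sum_congr rfl fun j _ => e1 j
  -- vectors for Cauchy–Schwarz
  set f : Fin n × Fin n → ℝ := fun p =>
    s ^ 2 * H p.1 p.2 + (t * v p.1 - s * w p.1) * v p.2 + (-(s * v p.1)) * w p.2 with hf_def
  set g : Fin n × Fin n → ℝ := fun p =>
    s * (if p.1 = p.2 then 1 else 0) - v p.1 * v p.2 with hg_def
  have CS := Finset.sum_mul_sq_le_sq_mul_sq Finset.univ f g
  have hfe : ∀ i j, f (i, j) =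
      s ^ 2 * H i j + (t * v i - s * w i) * v j + (-(s * v i)) * w j := fun i j => rfl
  -- ∑ f * g
  have hfg : ∑ p, f p * g p = s ^ 2 * (s * T - t) := by
    rw [Fintype.sum_prod_type]
    have inner : ∀ i, ∑ j, f (i, j) * g (i, j)
        = s ^ 3 * H i i + s * t * v i ^ 2 - 2 * s ^ 2 * (v i * w i) := by
      intro i
      have split : ∀ j, f (i, j) * g (i, j)
          = (if i = j then s * f (i, j) else 0) + (-(v i)) * (f (i, j) * v j) := by
        intro j
        by_cases h : i = j <;> simp [hg_def, h] <;> ring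
      rw [Finset.sum_congr rfl fun j _ => split j, Finset.sum_add_distrib,
        Finset.sum_ite_eq, ← Finset.mul_sum]
      have hfv : ∑ j, f (i, j) * v j = 0 := by
        have e := sum_lin_mul (s ^ 2) (t * v i - s * w i) (-(s * v i)) (H i) v w v
        rw [Finset.sum_congr rfl fun j _ => by rw [hfe i j], e, ← hw i, hvv, hwv]
        ring
      simp only [Finset.mem_univ, if_true, hfv, mul_zero, add_zero]
      rw [hfe i i]
      ring
    rw [Finset.sum_congr rfl fun i _ => inner i]
    simp only [Finset.sum_add_distrib, Finset.sum_sub_distrib, ← Finset.mul_sum]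
    rw [hT, hvw, ← hs_def]
    ring
  -- ∑ g ^ 2
  have hgg : ∑ p, g p ^ 2 = ((n : ℝ) - 1) * s ^ 2 := by
    rw [Fintype.sum_prod_type]
    have inner : ∀ i, ∑ j, g (i, j) ^ 2 = s ^ 2 - s * v i ^ 2 := by
      intro i
      have split : ∀ j, g (i, j) ^ 2
          = (if i = j then s ^ 2 - 2 * s * (v i * v j) else 0) + v i ^ 2 * v j ^ 2 := by
        intro j
        by_cases h : i = j <;> simp [hg_def, h] <;> ring
      rw [Finset.sum_congr rfl fun j _ => split j, Finset.sum_add_distrib,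
        Finset.sum_ite_eq, ← Finset.mul_sum]
      simp only [Finset.mem_univ, if_true]
      rw [← hs_def]
      ring
    rw [Finset.sum_congr rfl fun i _ => inner i]
    rw [Finset.sum_sub_distrib, Finset.sum_const, ← Finset.mul_sum, ← hs_def,
      Finset.card_univ, Fintype.card_fin, nsmul_eq_mul]
    ring
  -- ∑ f ^ 2
  have hff : ∑ p, f p ^ 2 = s ^ 2 * (s ^ 2 * SH - 2 * s * SW + t ^ 2) := by
    rw [Fintype.sum_prod_type]
    have inner : ∀ i, ∑ j, f (i, j) ^ 2 =
        s ^ 4 * (∑ j, H i j ^ 2) + (s ^ 2 * SW - s * t ^ 2) * v i ^ 2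
        + (-(s ^ 3)) * w i ^ 2 + (2 * s ^ 2 * t) * (v i * w i)
        + (-(2 * s ^ 3)) * (v i * (∑ j, H i j * w j)) := by
      intro i
      have e := sum_sq_comb (s ^ 2) (t * v i - s * w i) (-(s * v i)) (H i) v w
      rw [Finset.sum_congr rfl fun j _ => by rw [hfe i j], e, ← hw i, ← hs_def, ← hSW_def, hvw]
      ring
    rw [Finset.sum_congr rfl fun i _ => inner i]
    simp only [Finset.sum_add_distrib, ← Finset.mul_sum]
    rw [← hSH_def, hq, ← hs_def, ← hSW_def, hvw]
    ring
  rw [hfg, hgg, hff] at CS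
  have hn1 : (0 : ℝ) < (n : ℝ) - 1 := by
    have : (2 : ℝ) ≤ (n : ℝ) := by exact_mod_cast hn
    linarith
  have h4 : (0 : ℝ) < s ^ 4 := by positivity
  have key : (s * T - t) ^ 2 ≤ ((n : ℝ) - 1) * (s ^ 2 * SH - 2 * s * SW + t ^ 2) := by
    refine le_of_mul_le_mul_left ?_ h4
    linarith [CS]
  have hdiv : (s * T - t) ^ 2 / ((n : ℝ) - 1) ≤ s ^ 2 * SH - 2 * s * SW + t ^ 2 := by
    rw [div_le_iff₀ hn1]
    linarith [key]
  linarith [hdiv]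
end

section
/- For any symmetric n×n real matrix H and any nonzero vector v ∈ ℝⁿ, one has |v|⁴‖H‖_F² ≥ 2|v|²|Hv|² − ⟨Hv,v⟩², where ‖H‖_F is the Frobenius norm. -/
open Matrix Finset

theorem simple_fundamental_inequality (n : ℕ)
    (H : Matrix (Fin n) (Fin n) ℝ) (hH : H.IsSymm)
    (v : Fin n → ℝ) (hv : v ≠ 0) :
    (∑ i, v i ^ 2) ^ 2 * (∑ i, ∑ j, H i j ^ 2) ≥
      2 * (∑ i, v i ^ 2) * (∑ i, (H.mulVec v i) ^ 2)
      - (H.mulVec v ⬝ᵥ v) ^ 2 := by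
  set a := ∑ i, v i ^ 2 with ha
  set w := H.mulVec v with hw
  set t := w ⬝ᵥ v with ht
  have hapos : 0 < a := by
    obtain ⟨i, hi⟩ : ∃ i, v i ≠ 0 := by
      by_contra h; push_neg at h; exact hv (funext h)
    have h1 : 0 < v i ^ 2 := by positivity
    exact lt_of_lt_of_le h1
      (Finset.single_le_sum (fun j _ => sq_nonneg (v j)) (Finset.mem_univ i))
  have hsym : ∀ i j, H j i = H i j := fun i j => hH.apply i j
  have hwdef : ∀ i, w i = ∑ j, H i j * v j := fun i => rfl
  have htdef : t = ∑ i, w i * v i := rfl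
  set A := ∑ i, ∑ j, H i j ^ 2 with hA
  set W := ∑ i, w i ^ 2 with hW
  -- product sum lemma
  have prod_sum : ∀ f g : Fin n → ℝ,
      (∑ i, ∑ j, f i * g j) = (∑ i, f i) * (∑ j, g j) := by
    intro f g
    rw [Finset.sum_mul_sum]
  -- the six sum evaluations
  have hB : (∑ i, ∑ j, (w i * v j + v i * w j) ^ 2) = 2 * a * W + 2 * t ^ 2 := by
    have e : ∀ i j : Fin n, (w i * v j + v i * w j) ^ 2 =
        (w i ^ 2) * (v j ^ 2) + 2 * ((w i * v i) * (w j * v j)) + (v i ^ 2) * (w j ^ 2) := by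
      intro i j; ring
    simp only [e, Finset.sum_add_distrib, ← Finset.mul_sum, ← Finset.sum_mul]
    rw [← ha, ← hW, ← htdef]
    ring
  have hC : (∑ i, ∑ j, (v i * v j) ^ 2) = a ^ 2 := by
    have e : ∀ i j : Fin n, (v i * v j) ^ 2 = v i ^ 2 * v j ^ 2 := by intro i j; ring
    simp only [e, ← Finset.mul_sum, ← Finset.sum_mul]
    rw [← ha]
    ring
  have hD : (∑ i, ∑ j, H i j * (w i * v j + v i * w j)) = 2 * W := by
    have e : ∀ i j : Fin n, H i j * (w i * v j + v i * w j) =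
        w i * (H i j * v j) + H i j * v i * w j := by intro i j; ring
    simp only [e, Finset.sum_add_distrib]
    have h1 : (∑ i, ∑ j, w i * (H i j * v j)) = W := by
      rw [hW]
      refine Finset.sum_congr rfl fun i _ => ?_
      rw [← Finset.mul_sum, ← hwdef i]; ring
    have h2 : (∑ i, ∑ j, H i j * v i * w j) = W := by
      rw [Finset.sum_comm, hW]
      refine Finset.sum_congr rfl fun j _ => ?_
      have : ∀ i, H i j * v i * w j = w j * (H j i * v i) := by
        intro i; rw [hsym i j]; ring
      simp only [this, ← Finset.mul_sum, ← hwdef j]; ring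
    rw [h1, h2]; ring
  have hE : (∑ i, ∑ j, H i j * (v i * v j)) = t := by
    rw [htdef]
    refine Finset.sum_congr rfl fun i _ => ?_
    have : ∀ j, H i j * (v i * v j) = (H i j * v j) * v i := by intro j; ring
    simp only [this, ← Finset.sum_mul, ← hwdef i]
  have hF : (∑ i, ∑ j, (w i * v j + v i * w j) * (v i * v j)) = 2 * t * a := by
    have e : ∀ i j : Fin n, (w i * v j + v i * w j) * (v i * v j) =
        (w i * v i) * (v j ^ 2) + (v i ^ 2) * (w j * v j) := by intro i j; ring
    simp only [e, Finset.sum_add_distrib, ← Finset.mul_sum, ← Finset.sum_mul]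
    rw [← ha, ← htdef]
    ring
  -- key identity
  have key : (∑ i, ∑ j,
      (a * (a * H i j) - a * (w i * v j + v i * w j) + t * (v i * v j)) ^ 2)
      = a ^ 2 * (a ^ 2 * A - 2 * a * W + t ^ 2) := by
    have e : ∀ i j : Fin n,
        (a * (a * H i j) - a * (w i * v j + v i * w j) + t * (v i * v j)) ^ 2 =
        (a ^ 2 * a ^ 2) * H i j ^ 2 + a ^ 2 * (w i * v j + v i * w j) ^ 2
          + t ^ 2 * (v i * v j) ^ 2
          - (2 * a ^ 2 * a) * (H i j * (w i * v j + v i * w j))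
          + (2 * a ^ 2 * t) * (H i j * (v i * v j))
          - (2 * a * t) * ((w i * v j + v i * w j) * (v i * v j)) := by
      intro i j; ring
    simp only [e, Finset.sum_add_distrib, Finset.sum_sub_distrib, ← Finset.mul_sum]
    rw [hB, hC, hD, hE, hF]
    ring
  have hnn : (0:ℝ) ≤ ∑ i, ∑ j,
      (a * (a * H i j) - a * (w i * v j + v i * w j) + t * (v i * v j)) ^ 2 :=
    Finset.sum_nonneg fun i _ => Finset.sum_nonneg fun j _ => sq_nonneg _
  rw [key] at hnn
  nlinarith [sq_nonneg a, hapos, mul_pos hapos hapos]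
end

section
/- Let n ≥ 2, H a symmetric n×n matrix, v ≠ 0 in ℝⁿ. Then ‖H‖_F² ≥ 2|D_T|² + (⟨Hv,v⟩/|v|²)², where D_T is the component of Hv/|v| orthogonal to v. -/
/-!
Put `s = v ⬝ᵥ v`, `u = H v` and `t = u ⬝ᵥ v`. For symmetric `H` the matrix
`M = (s - v vᵀ) H (s - v vᵀ) = s² H - s (u vᵀ + v uᵀ) + t v vᵀ`, which is `s²` times the
compression of `H` to `v⊥`, has `‖M‖_F² = s² (s² ‖H‖_F² - 2 s |u|² + t²) ≥ 0`.
Since `|D_T|² = |u|²/s - t²/s²` by Pythagoras, this is the claim after dividing by `s⁴`.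
-/

open Matrix Finset

namespace Matrix

variable {m n R : Type*} [Fintype m] [Fintype n]

section CommRing

variable [CommRing R]

theorem vec_dotProduct_vec_vecMulVec (A : Matrix m n R) (x : m → R) (y : n → R) :
    vec A ⬝ᵥ vec (vecMulVec x y) = x ⬝ᵥ A *ᵥ y := by
  rw [vec_dotProduct_vec, mul_vecMulVec, trace_vecMulVec, mulVec_transpose, dotProduct_mulVec]

theorem vec_vecMulVec_dotProduct_vec_vecMulVec (a c : m → R) (b d : n → R) :
    vec (vecMulVec a b) ⬝ᵥ vec (vecMulVec c d) = (a ⬝ᵥ c) * (b ⬝ᵥ d) := by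
  rw [vec_dotProduct_vec_vecMulVec, vecMulVec_mulVec, dotProduct_comm c]
  simp [mul_comm]

theorem vec_dotProduct_vec_self (A : Matrix m n R) :
    vec A ⬝ᵥ vec A = ∑ i, ∑ j, A i j ^ 2 := by
  simp only [dotProduct, vec, Fintype.sum_prod_type, sq]
  exact Finset.sum_comm

theorem IsSymm.dotProduct_mulVec_comm {H : Matrix n n R} (hH : H.IsSymm) (x y : n → R) :
    x ⬝ᵥ H *ᵥ y = H *ᵥ x ⬝ᵥ y := by
  rw [dotProduct_mulVec, ← mulVec_transpose, hH.eq]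

theorem IsSymm.vec_dotProduct_vec_compression {H : Matrix n n R} (hH : H.IsSymm) (v : n → R) :
    let s := v ⬝ᵥ v
    let u := H *ᵥ v
    let t := u ⬝ᵥ v
    let M := s ^ 2 • H - s • (vecMulVec u v + vecMulVec v u) + t • vecMulVec v v
    vec M ⬝ᵥ vec M = s ^ 2 * (s ^ 2 * (vec H ⬝ᵥ vec H) - 2 * s * (u ⬝ᵥ u) + t ^ 2) := by
  intro s u t M
  simp only [M, vec_add, vec_sub, vec_smul, dotProduct_add, add_dotProduct, dotProduct_sub,
    sub_dotProduct, dotProduct_smul, smul_dotProduct, vec_vecMulVec_dotProduct_vec_vecMulVec,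
    smul_eq_mul]
  simp only [vec_dotProduct_vec_vecMulVec, dotProduct_comm (vec (vecMulVec _ _)),
    hH.dotProduct_mulVec_comm v u]
  rw [dotProduct_comm v u]
  ring

end CommRing

section OrderedRing

variable [CommRing R] [LinearOrder R] [IsStrictOrderedRing R]

theorem dotProduct_self_pos {v : n → R} (hv : v ≠ 0) : 0 < v ⬝ᵥ v :=
  (sum_nonneg fun i _ => mul_self_nonneg (v i)).lt_of_ne' (dotProduct_self_eq_zero.not.mpr hv)

theorem IsSymm.two_mul_dotProduct_mul_sub_sq_le {H : Matrix n n R} (hH : H.IsSymm) (v : n → R) :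
    2 * (H *ᵥ v ⬝ᵥ H *ᵥ v) * (v ⬝ᵥ v) - (H *ᵥ v ⬝ᵥ v) ^ 2 ≤ (vec H ⬝ᵥ vec H) * (v ⬝ᵥ v) ^ 2 := by
  rcases eq_or_ne v 0 with rfl | hv
  · simp
  have hM := hH.vec_dotProduct_vec_compression v
  dsimp only at hM
  have := nonneg_of_mul_nonneg_right ((sum_nonneg fun i _ => mul_self_nonneg _).trans hM.le)
    (pow_pos (dotProduct_self_pos hv) 2)
  linarith

end OrderedRing

theorem sub_smul_dotProduct_sub_smul_self [Field R] {v : n → R} (hv : v ⬝ᵥ v ≠ 0) (u : n → R) :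
    let c := u ⬝ᵥ v / (v ⬝ᵥ v)
    (u - c • v) ⬝ᵥ (u - c • v) = u ⬝ᵥ u - (u ⬝ᵥ v) ^ 2 / (v ⬝ᵥ v) := by
  simp only [sub_dotProduct, dotProduct_sub, smul_dotProduct, dotProduct_smul, smul_eq_mul,
    dotProduct_comm v u]
  field_simp
  ring

end Matrix

theorem frobenius_lower_bound_general (n : ℕ)
    (H : Matrix (Fin n) (Fin n) ℝ) (hH : H.IsSymm)
    (v : Fin n → ℝ) (hv : v ≠ 0) :
    let nv := Real.sqrt (∑ i, v i ^ 2)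
    let w : Fin n → ℝ := fun i => H.mulVec v i / nv
    let lam : ℝ := (H.mulVec v ⬝ᵥ v) / (∑ i, v i ^ 2)
    let DT : Fin n → ℝ := fun i => w i - lam * (v i / nv)
    (∑ i, ∑ j, H i j ^ 2) ≥ 2 * (∑ i, DT i ^ 2) + lam ^ 2 := by
  intro nv w lam DT
  have hs := dotProduct_self_pos hv
  have hsum : ∑ i, v i ^ 2 = v ⬝ᵥ v := by simp only [dotProduct, sq]
  have hnv : nv ^ 2 = v ⬝ᵥ v := by rw [Real.sq_sqrt (hsum ▸ hs.le), hsum]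
  have hDT : ∑ i, DT i ^ 2 = (H *ᵥ v - lam • v) ⬝ᵥ (H *ᵥ v - lam • v) / (v ⬝ᵥ v) := by
    have hDTi : ∀ i, DT i = (H *ᵥ v - lam • v) i / nv := fun i => by
      simp only [DT, w, Pi.sub_apply, Pi.smul_apply, smul_eq_mul]
      ring
    rw [dotProduct, sum_div]
    refine sum_congr rfl fun i _ => ?_
    rw [hDTi, div_pow, hnv, sq]
  have hlam : lam = (H *ᵥ v ⬝ᵥ v) / (v ⬝ᵥ v) := by simp only [lam, hsum]
  rw [ge_iff_le, hDT, hlam, sub_smul_dotProduct_sub_smul_self hs.ne', ← vec_dotProduct_vec_self]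
  have key := hH.two_mul_dotProduct_mul_sub_sq_le v
  rw [← sub_nonneg]
  field_simp
  linarith

theorem frobenius_lower_bound (n : ℕ) (hn : 2 ≤ n)
    (H : Matrix (Fin n) (Fin n) ℝ) (hH : H.IsSymm)
    (v : Fin n → ℝ) (hv : v ≠ 0) :
    let nv := Real.sqrt (∑ i, v i ^ 2)
    let w : Fin n → ℝ := fun i => H.mulVec v i / nv
    let lam : ℝ := (H.mulVec v ⬝ᵥ v) / (∑ i, v i ^ 2)
    let DT : Fin n → ℝ := fun i => w i - lam * (v i / nv)
    (∑ i, ∑ j, H i j ^ 2) ≥ 2 * (∑ i, DT i ^ 2) + lam ^ 2 :=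
  frobenius_lower_bound_general n H hH v hv
end

section
/- Let 1 < p < ∞ and s > −1. Set η = min{(p+s)/4, (p−1)(s+1)/6}. Then for all real numbers a, b, c with a² ≥ 2b² − c² (representing |D²u|² ≥ 2|D|Du||² − (Δ_∞^N u)²) and b² ≥ c² (Cauchy–Schwarz), one has a² + (p−2+s−η)b² + (s(p−2)−η)c² ≥ η b². -/
theorem coefficient_estimate (p s : ℝ) (hp : 1 < p) (hs : -1 < s)
    (a b c : ℝ) (h1 : a ^ 2 ≥ 2 * b ^ 2 - c ^ 2) (h2 : b ^ 2 ≥ c ^ 2) :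
    let η := min ((p + s) / 4) ((p - 1) * (s + 1) / 6)
    a ^ 2 + (p - 2 + s - η) * b ^ 2 + (s * (p - 2) - η) * c ^ 2 ≥ η * b ^ 2 := by
  intro η
  have h3 : η ≤ (p + s) / 4 := min_le_left _ _
  have h4 : η ≤ (p - 1) * (s + 1) / 6 := min_le_right _ _
  have hps : 0 < (p - 1) * (s + 1) := by nlinarith
  have hc : c ^ 2 ≥ 0 := sq_nonneg c
  rcases le_or_gt 0 (s * (p - 2) - 1 - η) with h | h
  · nlinarith [mul_nonneg h hc, mul_nonneg (by linarith : (0:ℝ) ≤ p + s - 2 * η) (sq_nonneg b)]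
  · nlinarith [mul_nonneg (by linarith : (0:ℝ) ≤ 1 + η - s * (p - 2)) (by linarith : (0:ℝ) ≤ b ^ 2 - c ^ 2),
      mul_nonneg (by linarith : (0:ℝ) ≤ (p - 1) * (s + 1) - 3 * η) (sq_nonneg b)]
end

section
/- Let p > 1, s > −1, ε ≥ 0, and let H be symmetric n×n with n ≥ 1, v ∈ ℝⁿ, μ² = |v|² + ε > 0. Define σ = ‖H‖_F² + (p−2+s)|Hv|²/μ² + s(p−2)⟨Hv,v⟩²/μ⁴. Then there exists λ = λ(p,s) > 0, independent of n, ε, H, v, such that σ ≥ λ‖H‖_F². -/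
open Matrix Finset

/-- Scalar core inequality. -/
lemma scalar_core (p s F W Q N M lam : ℝ) (hp : 1 < p) (hs : -1 < s)
    (hl1 : lam ≤ 1) (hl2 : lam ≤ (p + s) / 2) (hl3 : lam ≤ (p - 1) * (1 + s))
    (hF : 0 ≤ F) (hW : 0 ≤ W) (hN : 0 ≤ N) (hNM : N ≤ M) (hM : 0 < M)
    (hCS : Q ^ 2 ≤ W * N) (hWF : W ≤ F * N) (hSym : 2 * W * N ≤ F * N ^ 2 + Q ^ 2) :
    lam * (F * M ^ 2)
      ≤ F * M ^ 2 + (p - 2 + s) * W * M + s * (p - 2) * Q ^ 2 := by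
  have hQ2 : 0 ≤ Q ^ 2 := sq_nonneg _
  have hFM2 : 0 ≤ F * M ^ 2 := mul_nonneg hF (sq_nonneg _)
  have hFNM : F * N * M ≤ F * M ^ 2 := by
    have h := mul_le_mul_of_nonneg_right (mul_le_mul_of_nonneg_left hNM hF) hM.le
    linarith [h]
  have hWM : W * M ≤ F * M ^ 2 := le_trans (mul_le_mul_of_nonneg_right hWF hM.le) hFNM
  have hQWM : Q ^ 2 ≤ W * M := le_trans hCS (mul_le_mul_of_nonneg_left hNM hW)
  have hl1' : 0 ≤ (1 - lam) * (F * M ^ 2) := mul_nonneg (by linarith) hFM2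
  rcases lt_or_ge (s * (p - 2)) 0 with hbneg | hbpos
  · -- b < 0 : b*Q^2 ≥ b*W*M
    have h1 : s * (p - 2) * (W * M) ≤ s * (p - 2) * Q ^ 2 :=
      mul_le_mul_of_nonpos_left hQWM hbneg.le
    rcases le_or_gt 0 ((p - 2 + s) + s * (p - 2)) with habp | habn
    · have h2 : 0 ≤ ((p - 2 + s) + s * (p - 2)) * (W * M) :=
        mul_nonneg habp (mul_nonneg hW hM.le)
      linarith
    · have h2 : ((p - 2 + s) + s * (p - 2)) * (F * M ^ 2)
          ≤ ((p - 2 + s) + s * (p - 2)) * (W * M) :=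
        mul_le_mul_of_nonpos_left hWM habn.le
      have h3 : (lam - (1 + (p - 2 + s) + s * (p - 2))) * (F * M ^ 2) ≤ 0 :=
        mul_nonpos_of_nonpos_of_nonneg (by nlinarith [hl3]) hFM2
      linarith
  · -- b ≥ 0
    have hbQ : 0 ≤ s * (p - 2) * Q ^ 2 := mul_nonneg hbpos hQ2
    rcases le_or_gt 0 (p - 2 + s) with hapos | haneg
    · have h1 : 0 ≤ (p - 2 + s) * (W * M) := mul_nonneg hapos (mul_nonneg hW hM.le)
      linarith
    · -- a < 0
      have h2 : (p - 2 + s) * (F * M ^ 2) ≤ (p - 2 + s) * (F * N * M) :=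
        mul_le_mul_of_nonpos_left hFNM haneg.le
      have h3 : (lam - (1 + (p - 2 + s) / 2)) * (F * M ^ 2) ≤ 0 :=
        mul_nonpos_of_nonpos_of_nonneg (by linarith) hFM2
      rcases le_or_gt (2 * W) (F * N) with hsmall | hbig
      · -- 2W ≤ FN : a*W*M ≥ a*F*M²/2
        have hWM2 : W * M ≤ F * N * M / 2 := by
          have h := mul_le_mul_of_nonneg_right hsmall hM.le
          linarith
        have h1 : (p - 2 + s) * (F * N * M / 2) ≤ (p - 2 + s) * (W * M) :=
          mul_le_mul_of_nonpos_left hWM2 haneg.le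
        linarith
      · -- 2W > FN
        have hQlow : s * (p - 2) * (2 * W * N - F * N ^ 2) ≤ s * (p - 2) * Q ^ 2 :=
          mul_le_mul_of_nonneg_left (by linarith) hbpos
        rcases le_or_gt 0 ((p - 2 + s) * M + 2 * (s * (p - 2)) * N) with hc | hc
        · -- W ≥ FN/2
          have h1 : F * N / 2 * ((p - 2 + s) * M + 2 * (s * (p - 2)) * N)
              ≤ W * ((p - 2 + s) * M + 2 * (s * (p - 2)) * N) :=
            mul_le_mul_of_nonneg_right (by linarith) hc
          linarith
        · -- aM + 2bN < 0, use W ≤ FN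
          have h1 : F * N * ((p - 2 + s) * M + 2 * (s * (p - 2)) * N)
              ≤ W * ((p - 2 + s) * M + 2 * (s * (p - 2)) * N) :=
            mul_le_mul_of_nonpos_right hWF hc.le
          have hp2 : p ≤ 2 := by
            by_contra hcon; push_neg at hcon
            have h5 : s < 0 := by linarith
            have h6 : s * (p - 2) < 0 := mul_neg_of_neg_of_pos h5 (by linarith)
            linarith
          have hs0 : s ≤ 0 := by
            by_contra hcon; push_neg at hcon
            rcases lt_or_ge p 2 with h7 | h7
            · have h6 : s * (p - 2) < 0 := mul_neg_of_pos_of_neg hcon (by linarith)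
              linarith
            · linarith
          have ha2b : (p - 2 + s) + 2 * (s * (p - 2)) ≤ 0 := by
            have e1 : 0 ≤ (2 - p) * (1 + s) := mul_nonneg (by linarith) (by linarith)
            have e2 : 0 ≤ (-s) * (p - 1) := mul_nonneg (by linarith) (by linarith)
            nlinarith [e1, e2]
          have h2' : 0 ≤ (M - N) *
              (-((p - 2 + s) * M + s * (p - 2) * N + s * (p - 2) * M)) := by
            apply mul_nonneg (by linarith)
            have hbN : s * (p - 2) * N ≤ s * (p - 2) * M :=
              mul_le_mul_of_nonneg_left hNM hbpos
            have h8 : ((p - 2 + s) + 2 * (s * (p - 2))) * M ≤ 0 :=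
              mul_nonpos_of_nonpos_of_nonneg ha2b hM.le
            linarith [hbN, h8]
          have h3' : (lam - (1 + (p - 2 + s) + s * (p - 2))) * (F * M ^ 2) ≤ 0 :=
            mul_nonpos_of_nonpos_of_nonneg (by nlinarith [hl3]) hFM2
          have h4 : 0 ≤ F * ((M - N) *
              (-((p - 2 + s) * M + s * (p - 2) * N + s * (p - 2) * M))) :=
            mul_nonneg hF h2'
          linarith

theorem sigma_lower_bound (p s : ℝ) (hp : 1 < p) (hs : -1 < s) :
    ∃ lam : ℝ, 0 < lam ∧
      ∀ (n : ℕ), 1 ≤ n → ∀ (ε : ℝ), 0 ≤ ε →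
        ∀ (H : Matrix (Fin n) (Fin n) ℝ), H.IsSymm →
          ∀ v : Fin n → ℝ,
            0 < (∑ i, v i ^ 2) + ε →
            (∑ i, ∑ j, H i j ^ 2)
              + (p - 2 + s) * (∑ i, (H.mulVec v i) ^ 2) / ((∑ i, v i ^ 2) + ε)
              + s * (p - 2) * (H.mulVec v ⬝ᵥ v) ^ 2 / ((∑ i, v i ^ 2) + ε) ^ 2
              ≥ lam * (∑ i, ∑ j, H i j ^ 2) := by
  refine ⟨min 1 (min ((p + s) / 2) ((p - 1) * (1 + s))), ?_, ?_⟩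
  · exact lt_min one_pos (lt_min (by linarith) (mul_pos (by linarith) (by linarith)))
  · intro n hn ε hε H hH v hMpos
    have hu : ∀ i, H.mulVec v i = ∑ j, H i j * v j := by
      intro i; simp [Matrix.mulVec, dotProduct]
    have hsymm : ∀ i j, H i j = H j i := fun i j => hH.apply j i
    set u : Fin n → ℝ := H.mulVec v with hudef
    set F : ℝ := ∑ i, ∑ j, H i j ^ 2 with hFdef
    set W : ℝ := ∑ i, u i ^ 2 with hWdef
    set N : ℝ := ∑ i, v i ^ 2 with hNdef
    set Q : ℝ := u ⬝ᵥ v with hQdef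
    have hQ : Q = ∑ i, u i * v i := rfl
    have hF : (0:ℝ) ≤ F := Finset.sum_nonneg fun i _ => Finset.sum_nonneg fun j _ => sq_nonneg _
    have hW : (0:ℝ) ≤ W := Finset.sum_nonneg fun i _ => sq_nonneg _
    have hN : (0:ℝ) ≤ N := Finset.sum_nonneg fun i _ => sq_nonneg _
    have hNM : N ≤ N + ε := by linarith
    have hCS : Q ^ 2 ≤ W * N := by
      rw [hQ, hWdef, hNdef]
      exact Finset.sum_mul_sq_le_sq_mul_sq _ _ _
    have hWF : W ≤ F * N := by
      rw [hWdef, hFdef, hNdef, Finset.sum_mul]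
      refine Finset.sum_le_sum fun i _ => ?_
      rw [hu i]
      exact Finset.sum_mul_sq_le_sq_mul_sq _ _ _
    have hSym : 2 * W * N ≤ F * N ^ 2 + Q ^ 2 := by
      rcases eq_or_lt_of_le hN with hN0 | hNpos
      · rw [← hN0]
        have : (0:ℝ) ≤ Q ^ 2 := sq_nonneg _
        nlinarith
      · -- sum of squares identity
        have S2 : ∑ i, ∑ j, H i j * (u i * v j) = W := by
          have e : ∀ i : Fin n, ∑ j, H i j * (u i * v j) = u i ^ 2 := by
            intro i
            calc ∑ j, H i j * (u i * v j) = u i * ∑ j, H i j * v j := by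
                  rw [Finset.mul_sum]; exact Finset.sum_congr rfl fun j _ => by ring
              _ = u i * u i := by rw [← hu i]
              _ = u i ^ 2 := by ring
          rw [Finset.sum_congr rfl fun i _ => e i, hWdef]
        have S3 : ∑ i, ∑ j, H i j * (v i * u j) = W := by
          rw [Finset.sum_comm]
          have e : ∀ j : Fin n, ∑ i, H i j * (v i * u j) = u j ^ 2 := by
            intro j
            calc ∑ i, H i j * (v i * u j) = u j * ∑ i, H j i * v i := by
                  rw [Finset.mul_sum]
                  exact Finset.sum_congr rfl fun i _ => by rw [hsymm i j]; ring
              _ = u j * u j := by rw [← hu j]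
              _ = u j ^ 2 := by ring
          rw [Finset.sum_congr rfl fun j _ => e j, hWdef]
        have S4 : ∑ i, ∑ j, H i j * (v i * v j) = Q := by
          have e : ∀ i : Fin n, ∑ j, H i j * (v i * v j) = u i * v i := by
            intro i
            calc ∑ j, H i j * (v i * v j) = v i * ∑ j, H i j * v j := by
                  rw [Finset.mul_sum]; exact Finset.sum_congr rfl fun j _ => by ring
              _ = v i * u i := by rw [← hu i]
              _ = u i * v i := by ring
          rw [Finset.sum_congr rfl fun i _ => e i, hQ]
        have S5 : ∑ i, ∑ j, (u i * v j) ^ 2 = W * N := by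
          rw [hWdef, hNdef, Finset.sum_mul_sum]
          exact Finset.sum_congr rfl fun i _ => Finset.sum_congr rfl fun j _ =>
            mul_pow _ _ _
        have S6 : ∑ i, ∑ j, (v i * u j) ^ 2 = N * W := by
          rw [hWdef, hNdef, Finset.sum_mul_sum]
          exact Finset.sum_congr rfl fun i _ => Finset.sum_congr rfl fun j _ =>
            mul_pow _ _ _
        have S7 : ∑ i, ∑ j, (v i * v j) ^ 2 = N * N := by
          rw [hNdef, Finset.sum_mul_sum]
          exact Finset.sum_congr rfl fun i _ => Finset.sum_congr rfl fun j _ =>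
            mul_pow _ _ _
        have S8 : ∑ i, ∑ j, (u i * v j) * (v i * u j) = Q * Q := by
          rw [hQ, Finset.sum_mul_sum]
          exact Finset.sum_congr rfl fun i _ => Finset.sum_congr rfl fun j _ => by ring
        have S9 : ∑ i, ∑ j, (u i * v j) * (v i * v j) = Q * N := by
          rw [hQ, hNdef, Finset.sum_mul_sum]
          exact Finset.sum_congr rfl fun i _ => Finset.sum_congr rfl fun j _ => by ring
        have S10 : ∑ i, ∑ j, (v i * u j) * (v i * v j) = N * Q := by
          rw [hQ, hNdef, Finset.sum_mul_sum]
          exact Finset.sum_congr rfl fun i _ => Finset.sum_congr rfl fun j _ => by ring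
        have hsq : ∑ i, ∑ j,
            (N ^ 2 * H i j - N * (u i * v j) - N * (v i * u j) + Q * (v i * v j)) ^ 2
            = N ^ 4 * F - 2 * N ^ 3 * W - 2 * N ^ 3 * W + 2 * N ^ 2 * Q * Q
              + N ^ 2 * (W * N) + N ^ 2 * (N * W) + Q ^ 2 * (N * N)
              + 2 * N ^ 2 * (Q * Q) - 2 * N * Q * (Q * N) - 2 * N * Q * (N * Q) := by
          have expand : ∀ i j : Fin n,
              (N ^ 2 * H i j - N * (u i * v j) - N * (v i * u j) + Q * (v i * v j)) ^ 2
              = N ^ 4 * H i j ^ 2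
                - 2 * N ^ 3 * (H i j * (u i * v j))
                - 2 * N ^ 3 * (H i j * (v i * u j))
                + 2 * N ^ 2 * Q * (H i j * (v i * v j))
                + N ^ 2 * (u i * v j) ^ 2
                + N ^ 2 * (v i * u j) ^ 2
                + Q ^ 2 * (v i * v j) ^ 2
                + 2 * N ^ 2 * ((u i * v j) * (v i * u j))
                - 2 * N * Q * ((u i * v j) * (v i * v j))
                - 2 * N * Q * ((v i * u j) * (v i * v j)) := by
            intro i j; ring
          rw [Finset.sum_congr rfl fun i _ => Finset.sum_congr rfl fun j _ => expand i j]
          simp only [Finset.sum_add_distrib, Finset.sum_sub_distrib, ← Finset.mul_sum]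
          rw [S2, S3, S4, S5, S6, S7, S8, S9, S10, hFdef]
        have hsqpos : 0 ≤ N ^ 2 * (F * N ^ 2 - 2 * N * W + Q ^ 2) := by
          have h0 : 0 ≤ ∑ i, ∑ j,
              (N ^ 2 * H i j - N * (u i * v j) - N * (v i * u j) + Q * (v i * v j)) ^ 2 :=
            Finset.sum_nonneg fun i _ => Finset.sum_nonneg fun j _ => sq_nonneg _
          rw [hsq] at h0
          have e : N ^ 2 * (F * N ^ 2 - 2 * N * W + Q ^ 2)
              = N ^ 4 * F - 2 * N ^ 3 * W - 2 * N ^ 3 * W + 2 * N ^ 2 * Q * Q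
              + N ^ 2 * (W * N) + N ^ 2 * (N * W) + Q ^ 2 * (N * N)
              + 2 * N ^ 2 * (Q * Q) - 2 * N * Q * (Q * N) - 2 * N * Q * (N * Q) := by
            ring
          exact le_of_le_of_eq h0 e.symm
        have hN2 : (0:ℝ) < N ^ 2 := by positivity
        have hX : 0 ≤ F * N ^ 2 - 2 * N * W + Q ^ 2 :=
          nonneg_of_mul_nonneg_left (by linarith [hsqpos] : 0 ≤ (F * N ^ 2 - 2 * N * W + Q ^ 2) * N ^ 2) hN2
        linarith [hX]
    -- assemble
    have key := scalar_core p s F W Q N (N + ε)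
      (min 1 (min ((p + s) / 2) ((p - 1) * (1 + s)))) hp hs
      (min_le_left _ _) (le_trans (min_le_right _ _) (min_le_left _ _))
      (le_trans (min_le_right _ _) (min_le_right _ _))
      hF hW hN hNM hMpos hCS hWF hSym
    rw [ge_iff_le, ← sub_nonneg]
    have hMne : (N + ε) ≠ 0 := ne_of_gt hMpos
    have heq : F + (p - 2 + s) * W / (N + ε) + s * (p - 2) * Q ^ 2 / (N + ε) ^ 2
        - min 1 (min ((p + s) / 2) ((p - 1) * (1 + s))) * F
        = (F * (N + ε) ^ 2 + (p - 2 + s) * W * (N + ε) + s * (p - 2) * Q ^ 2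
            - min 1 (min ((p + s) / 2) ((p - 1) * (1 + s))) * (F * (N + ε) ^ 2))
          / (N + ε) ^ 2 := by
      field_simp
    rw [heq]
    exact div_nonneg (by linarith [key]) (sq_nonneg _)
end
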